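/- Let G = (V,E) be a finite undirected multigraph, A, B ⊆ V², e ∈ E, and let φ be a fourientation of G \ e. Let c ∈ {←e, →e} be a 1-way configuration of e such that φ ∪ c is (A,B)-valid. If the arc c is cyclic in the digraph D(c), then φ ∪ ↔e is (A,B)-valid; if the arc c is acyclic in D(c), then φ ∪ ↑e is (A,B)-valid. -/

import Mathlib

namespace SubgraphsVsOrientations

/-- The four possible configurations of an edge in a fourientation:
`zero` = 0-way, `forward`/`backward` = the two 1-way configurations (relative to
a reference direction of the edge), `two` = 2-way. -/
inductive Four : Type
  | zero | forward | backward | two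
deriving DecidableEq

instance : Fintype Four where
  elems := {Four.zero, Four.forward, Four.backward, Four.two}
  complete := by intro x; cases x <;> simp

variable {V E : Type*}

/-- Whether configuration `c` allows traversal of the edge in direction `b`
(`b = true` means from `src` to `tgt`). -/
def allows : Four → Bool → Prop
  | Four.zero, _ => False
  | Four.forward, b => b = true
  | Four.backward, b => b = false
  | Four.two, _ => True

/-- An edge configuration is solid if it is 0-way or 2-way. -/
def IsSolid (c : Four) : Prop := c = Four.zero ∨ c = Four.two

/-- A configuration is 1-way if it is `forward` or `backward`. -/
def IsOneWay (c : Four) : Prop := c = Four.forward ∨ c = Four.backward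

/-- Reversing a configuration: swaps the two 1-way configurations,
fixes 0-way and 2-way. -/
def flipFour : Four → Four
  | Four.forward => Four.backward
  | Four.backward => Four.forward
  | c => c

/-- The 1-way configuration corresponding to direction `b`. -/
def oneWayFour (b : Bool) : Four := if b then Four.forward else Four.backward

/-- Tail of the arc `(e, b)` (the edge `e` traversed in direction `b`). -/
def arcTail (src tgt : E → V) (a : E × Bool) : V := if a.2 then src a.1 else tgt a.1

/-- Head of the arc `(e, b)`. -/
def arcHead (src tgt : E → V) (a : E × Bool) : V := if a.2 then tgt a.1 else src a.1

/-- One-step relation of the digraph `G⃗(A,B;φ)`: there is an arc from `x` to `y`, either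
a traversable directed edge of the fourientation `φ`, or an extra arc from `A ∪ B`. -/
def arcStep (src tgt : E → V) (A B : Set (V × V)) (φ : E → Four) (x y : V) : Prop :=
  (∃ a : E × Bool, allows (φ a.1) a.2 ∧ arcTail src tgt a = x ∧ arcHead src tgt a = y)
    ∨ (x, y) ∈ A ∪ B

/-- Reachability by a directed path in the digraph `G⃗(A,B;φ)`. -/
def reach (src tgt : E → V) (A B : Set (V × V)) (φ : E → Four) : V → V → Prop :=
  Relation.ReflTransGen (arcStep src tgt A B φ)

/-- A fourientation `φ` is `(A,B)`-valid: in `G⃗(A,B;φ)`, for every `(u,v) ∈ A` the vertex `v`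
cannot reach `u`, and for every `(u,v) ∈ B` the vertex `v` can reach `u`. -/
def IsValid (src tgt : E → V) (A B : Set (V × V)) (φ : E → Four) : Prop :=
  (∀ p ∈ A, ¬ reach src tgt A B φ p.2 p.1) ∧ (∀ p ∈ B, reach src tgt A B φ p.2 p.1)

/-- The set of solid edges of a fourientation. -/
def solidSet (φ : E → Four) : Set E := {e | IsSolid (φ e)}

/-- The fourientation associated to an orientation `σ : E → Bool` (every edge 1-way). -/
def toFour (σ : E → Bool) : E → Four := fun e => oneWayFour (σ e)

open Classical in
/-- The fourientation associated to a (spanning) subgraph `F ⊆ E`: edges of `F` are 2-way,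
the other edges are 0-way. -/
noncomputable def toFourSub (F : Set E) : E → Four :=
  fun e => if e ∈ F then Four.two else Four.zero

/-- The arc `(e,b)` is the arc of a 1-way edge of `φ`. -/
def oneWayArc (φ : E → Four) (a : E × Bool) : Prop := φ a.1 = oneWayFour a.2

/-- `Cyc(φ)`: the set of cyclic 1-way edges (arcs) of the fourientation `φ`, in the digraph
`G⃗(A,B;φ)`: the head of the arc can reach its tail. -/
def CycSet (src tgt : E → V) (A B : Set (V × V)) (φ : E → Four) : Set (E × Bool) :=
  {a | oneWayArc φ a ∧ reach src tgt A B φ (arcHead src tgt a) (arcTail src tgt a)}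

/-- `Acy(φ)`: the set of acyclic 1-way edges (arcs) of the fourientation `φ`. -/
def AcySet (src tgt : E → V) (A B : Set (V × V)) (φ : E → Four) : Set (E × Bool) :=
  {a | oneWayArc φ a ∧ ¬ reach src tgt A B φ (arcHead src tgt a) (arcTail src tgt a)}

/-- `l` is (the arc sequence of) a directed cycle: a nonempty closed chain of arcs
visiting no vertex twice. -/
def IsDirCycle (src tgt : E → V) (l : List (E × Bool)) : Prop :=
  ∃ h : l ≠ [],
    l.Chain' (fun a b => arcHead src tgt a = arcTail src tgt b) ∧
    arcHead src tgt (l.getLast h) = arcTail src tgt (l.head h) ∧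
    (l.map (arcTail src tgt)).Nodup

/-- Reversing the directed cycle `l` in the fourientation `φ`: all 1-way edges on the cycle are
reversed, other edges (in particular 2-way edges of the cycle) are unchanged. -/
def revCyc [DecidableEq E] (φ : E → Four) (l : List (E × Bool)) : E → Four :=
  fun e => if (e, true) ∈ l ∨ (e, false) ∈ l then flipFour (φ e) else φ e

/-- One cycle-reversal move: `ψ` is obtained from `φ` by reversing a directed cycle of `φ`. -/
def CycleStep (src tgt : E → V) [DecidableEq E] (φ ψ : E → Four) : Prop :=
  ∃ l, IsDirCycle src tgt l ∧ (∀ a ∈ l, allows (φ a.1) a.2) ∧ ψ = revCyc φ l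

/-- The edge `e` crosses the cut given by `V1` (in either direction). -/
def edgeCrosses (src tgt : E → V) (V1 : Set V) (e : E) : Prop :=
  (src e ∈ V1 ∧ tgt e ∉ V1) ∨ (tgt e ∈ V1 ∧ src e ∉ V1)

/-- The cut `V1 / V1ᶜ` defines a directed `(A,B)`-cocycle of `G⃗(A,B;φ)`: the set of arcs from
`V1` to `V1ᶜ` is nonempty, no arc of the digraph goes from `V1ᶜ` to `V1`, and no arc of
`A ∪ B` crosses the cut (in either direction). -/
def IsABCocycleCut (src tgt : E → V) (A B : Set (V × V)) (φ : E → Four) (V1 : Set V) : Prop :=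
  (∃ a : E × Bool, allows (φ a.1) a.2 ∧ arcTail src tgt a ∈ V1 ∧ arcHead src tgt a ∉ V1) ∧
  (∀ a : E × Bool, allows (φ a.1) a.2 → ¬ (arcTail src tgt a ∉ V1 ∧ arcHead src tgt a ∈ V1)) ∧
  (∀ p ∈ A ∪ B, ((p : V × V).1 ∈ V1 ↔ p.2 ∈ V1))

open Classical in
/-- Reversing the directed cocycle given by the cut `V1`: all 1-way edges crossing the cut are
reversed, other edges (in particular 0-way edges crossing the cut) are unchanged. -/
noncomputable def revCut (src tgt : E → V) (φ : E → Four) (V1 : Set V) : E → Four :=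
  fun e => if edgeCrosses src tgt V1 e then flipFour (φ e) else φ e

/-- One cocycle-reversal move: `ψ` is obtained from `φ` by reversing a directed
`(A,B)`-cocycle of `φ`. -/
def CocycleStep (src tgt : E → V) (A B : Set (V × V)) (φ ψ : E → Four) : Prop :=
  ∃ V1 : Set V, IsABCocycleCut src tgt A B φ V1 ∧ ψ = revCut src tgt φ V1

/-- One cycle- or cocycle-reversal move. -/
def CCStep (src tgt : E → V) (A B : Set (V × V)) [DecidableEq E] (φ ψ : E → Four) : Prop :=
  CycleStep src tgt φ ψ ∨ CocycleStep src tgt A B φ ψ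

/-- `φ` contains no cycle (of the graph `G`) made entirely of 2-way edges. -/
def NoTwoWayCycle (src tgt : E → V) (φ : E → Four) : Prop :=
  ¬ ∃ l : List (E × Bool), IsDirCycle src tgt l ∧ (l.map Prod.fst).Nodup ∧
      ∀ a ∈ l, φ a.1 = Four.two

/-- `φ` contains no `(A,B)`-cocycle (of the graph `G`) made entirely of 0-way edges:
there is no cut, not crossed by any arc of `A ∪ B`, crossed by at least one edge of `G`,
all of whose crossing edges are 0-way. -/
def NoZeroWayCocycle (src tgt : E → V) (A B : Set (V × V)) (φ : E → Four) : Prop :=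
  ¬ ∃ V1 : Set V, (∃ e, edgeCrosses src tgt V1 e) ∧
      (∀ e, edgeCrosses src tgt V1 e → φ e = Four.zero) ∧
      (∀ p ∈ A ∪ B, ((p : V × V).1 ∈ V1 ↔ p.2 ∈ V1))

/-- The subgraph `F` contains no cycle (it is a forest). -/
def NoCycleIn (src tgt : E → V) (F : Set E) : Prop :=
  ¬ ∃ l : List (E × Bool), IsDirCycle src tgt l ∧ (l.map Prod.fst).Nodup ∧ ∀ a ∈ l, a.1 ∈ F

/-- One undirected adjacency step in the graph `F ∪ A̲ ∪ B̲`. -/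
def usym (src tgt : E → V) (A B : Set (V × V)) (F : Set E) (x y : V) : Prop :=
  (∃ e ∈ F, (src e = x ∧ tgt e = y) ∨ (src e = y ∧ tgt e = x)) ∨
  (∃ p ∈ A ∪ B, ((p : V × V) = (x, y) ∨ p = (y, x)))

/-- Connectivity (by undirected paths) in the graph `F ∪ A̲ ∪ B̲`. -/
def ureach (src tgt : E → V) (A B : Set (V × V)) (F : Set E) : V → V → Prop :=
  Relation.ReflTransGen (usym src tgt A B F)

/-- The subgraph `F` is `(A,B)`-connected: the connected components of `F ∪ A̲ ∪ B̲`
coincide with those of `G ∪ A̲ ∪ B̲`. -/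
def ABConnected (src tgt : E → V) (A B : Set (V × V)) (F : Set E) : Prop :=
  ∀ x y, ureach src tgt A B F x y ↔ ureach src tgt A B Set.univ x y

/-!
Changing the configuration of `e` only adds or removes the arcs of `e`. If the arc `c` is cyclic,
its reverse arc can be replaced by a directed path from the head of `c` to its tail, so making `e`
2-way does not change reachability. If `c` is acyclic, dropping it cannot destroy a closed walk,
since a closed walk through `c` would make `c` cyclic; as every pair of `B` closes up into a closed
walk through its extra arc, the `B`-conditions survive, while the `A`-conditions only become
easier once arcs are removed.
-/

section Reach

variable {src tgt : E → V} {A B : Set (V × V)} {φ ψ : E → Four}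

theorem reach_mono (h : ∀ a : E × Bool, allows (φ a.1) a.2 → allows (ψ a.1) a.2) {x y : V}
    (hxy : reach src tgt A B φ x y) : reach src tgt A B ψ x y :=
  Relation.ReflTransGen.mono (p := arcStep src tgt A B ψ)
    (fun _ _ step => step.imp (fun ⟨a, ha, ht, hh⟩ => ⟨a, h a ha, ht, hh⟩) id) _ _ hxy

theorem IsValid.of_reach (hφ : IsValid src tgt A B φ)
    (hA : ∀ p ∈ A, reach src tgt A B ψ p.2 p.1 → reach src tgt A B φ p.2 p.1)
    (hB : ∀ p ∈ B, reach src tgt A B φ p.2 p.1 → reach src tgt A B ψ p.2 p.1) :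
    IsValid src tgt A B ψ :=
  ⟨fun p hp h => hφ.1 p hp (hA p hp h), fun p hp => hB p hp (hφ.2 p hp)⟩

theorem allows_two (b : Bool) : allows Four.two b := trivial

theorem not_allows_zero (b : Bool) : ¬ allows Four.zero b := id

theorem allows_oneWayFour_iff {b b' : Bool} : allows (oneWayFour b) b' ↔ b' = b := by
  cases b <;> cases b' <;> simp [oneWayFour, allows]

variable [DecidableEq E] {e : E}

theorem allows_update_mono {c d : Four} (h : ∀ b, allows c b → allows d b) (a : E × Bool) :
    allows (Function.update φ e c a.1) a.2 → allows (Function.update φ e d a.1) a.2 := by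
  rcases eq_or_ne a.1 e with hae | hne
  · simpa [hae] using h a.2
  · simp [Function.update_of_ne hne]

theorem allows_update_two {b : Bool} (a : E × Bool)
    (ha : allows (Function.update φ e Four.two a.1) a.2) :
    allows (Function.update φ e (oneWayFour b) a.1) a.2 ∨ a = (e, !b) := by
  obtain ⟨f, b'⟩ := a
  rcases eq_or_ne f e with rfl | hne
  · cases b <;> cases b' <;> simp [oneWayFour, allows]
  · exact Or.inl (by simpa [Function.update_of_ne hne] using ha)

theorem reach_update_oneWay_of_reach_update_two {b : Bool}
    (hcyc : reach src tgt A B (Function.update φ e (oneWayFour b))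
      (arcHead src tgt (e, b)) (arcTail src tgt (e, b)))
    {x y : V} (hxy : reach src tgt A B (Function.update φ e Four.two) x y) :
    reach src tgt A B (Function.update φ e (oneWayFour b)) x y := by
  refine Relation.reflTransGen_closed (fun u v step => ?_) _ _ hxy
  rcases step with ⟨a, ha, rfl, rfl⟩ | hAB
  · rcases allows_update_two (b := b) a ha with ha' | rfl
    · exact .single (Or.inl ⟨a, ha', rfl, rfl⟩)
    · cases b <;> simpa [arcHead, arcTail, reach] using hcyc
  · exact .single (Or.inr hAB)

theorem reach_update_oneWay_cases {b : Bool} {x y : V}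
    (hxy : reach src tgt A B (Function.update φ e (oneWayFour b)) x y) :
    reach src tgt A B (Function.update φ e Four.zero) x y ∨
      reach src tgt A B (Function.update φ e Four.zero) x (arcTail src tgt (e, b)) ∧
      reach src tgt A B (Function.update φ e (oneWayFour b)) (arcHead src tgt (e, b)) y := by
  induction hxy using Relation.ReflTransGen.head_induction_on with
  | refl => exact Or.inl .refl
  | @head u m step hmy ih =>
    have avoid : arcStep src tgt A B (Function.update φ e Four.zero) u m ∨
        u = arcTail src tgt (e, b) ∧ m = arcHead src tgt (e, b) := by
      rcases step with ⟨⟨f, b'⟩, ha, rfl, rfl⟩ | hAB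
      · rcases eq_or_ne f e with rfl | hne
        · rw [Function.update_self, allows_oneWayFour_iff] at ha
          obtain rfl : b' = b := ha
          exact Or.inr ⟨rfl, rfl⟩
        · have ha0 : allows (Function.update φ e Four.zero f) b' := by
            simpa [Function.update_of_ne hne] using ha
          exact Or.inl (Or.inl ⟨(f, b'), ha0, rfl, rfl⟩)
      · exact Or.inl (Or.inr hAB)
    rcases avoid with step0 | ⟨rfl, rfl⟩
    · exact ih.imp (.head step0) (And.imp_left (.head step0))
    · exact Or.inr ⟨.refl, hmy⟩

theorem reach_update_zero_of_reach_of_reach {b : Bool}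
    (hacyc : ¬ reach src tgt A B (Function.update φ e (oneWayFour b))
      (arcHead src tgt (e, b)) (arcTail src tgt (e, b)))
    {x y : V} (hxy : reach src tgt A B (Function.update φ e (oneWayFour b)) x y)
    (hyx : reach src tgt A B (Function.update φ e (oneWayFour b)) y x) :
    reach src tgt A B (Function.update φ e Four.zero) x y := by
  rcases reach_update_oneWay_cases hxy with h | ⟨hx_tail, hhead_y⟩
  · exact h
  · refine absurd (hhead_y.trans (hyx.trans (reach_mono ?_ hx_tail))) hacyc
    exact allows_update_mono fun b' h => absurd h (not_allows_zero b')

end Reach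

theorem statement7_general {V E : Type*} [DecidableEq E] (src tgt : E → V)
    (A B : Set (V × V)) (e : E) (φ : E → Four) (b : Bool)
    (hvalid : IsValid src tgt A B (Function.update φ e (oneWayFour b))) :
    (reach src tgt A B (Function.update φ e (oneWayFour b))
        (arcHead src tgt (e, b)) (arcTail src tgt (e, b)) →
      IsValid src tgt A B (Function.update φ e Four.two)) ∧
    (¬ reach src tgt A B (Function.update φ e (oneWayFour b))
        (arcHead src tgt (e, b)) (arcTail src tgt (e, b)) →
      IsValid src tgt A B (Function.update φ e Four.zero)) := by
  have zero_imp_oneWay : ∀ b', allows Four.zero b' → allows (oneWayFour b) b' :=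
    fun b' h => absurd h (not_allows_zero b')
  refine ⟨fun hcyc => ?_, fun hacyc => ?_⟩
  · exact hvalid.of_reach (fun _ _ => reach_update_oneWay_of_reach_update_two hcyc)
      (fun _ _ => reach_mono (allows_update_mono fun b' _ => allows_two b'))
  · exact hvalid.of_reach (fun _ _ => reach_mono (allows_update_mono zero_imp_oneWay))
      (fun _ hp h => reach_update_zero_of_reach_of_reach hacyc h (.single (Or.inr (Or.inr hp))))

/-- Let `φ` be a fourientation of `G \ e` and let `c` be a 1-way
configuration of `e` (direction `b`) such that `φ ∪ c` is `(A,B)`-valid. If the arc `c` is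
cyclic in `D(c)` then `φ ∪ ↔e` is `(A,B)`-valid; if the arc `c` is acyclic in `D(c)` then
`φ ∪ ↑e` is `(A,B)`-valid. -/
theorem statement7 {V E : Type*} [Fintype V] [Fintype E] [DecidableEq E] (src tgt : E → V)
    (A B : Set (V × V)) (e : E) (φ : E → Four) (b : Bool)
    (hvalid : IsValid src tgt A B (Function.update φ e (oneWayFour b))) :
    (reach src tgt A B (Function.update φ e (oneWayFour b))
        (arcHead src tgt (e, b)) (arcTail src tgt (e, b)) →
      IsValid src tgt A B (Function.update φ e Four.two)) ∧
    (¬ reach src tgt A B (Function.update φ e (oneWayFour b))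
        (arcHead src tgt (e, b)) (arcTail src tgt (e, b)) →
      IsValid src tgt A B (Function.update φ e Four.zero)) :=
  statement7_general src tgt A B e φ b hvalid

end SubgraphsVsOrientations
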